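/- Let m > 1, n ≥ 2 an integer, μ ∈ (-1,1), and R, Q > 0. Let ψ be the solution of ψ'' = wψ on (0,∞) with ψ(0)=0, ψ'(0)=1, where w(r) = 0 on [0,R], w(r) = Q(2R)^{2μ}(r−R)/R on (R,2R], w(r) = Q r^{2μ} for r > 2R. Then there exists R̄ > 0 depending only on n, m, μ, R, Q such that for every R₀ ≥ R̄ the following holds. Let E > 0 satisfy (n−1)ψ'(r)·r/ψ(r) ≥ E for all r ∈ (0, R₀), and suppose also (n−1)ψ'(r)/(ψ(r) r^μ) − μ/r^{1+μ} ≥ (n−1)√(Q/2) for all r ≥ R₀. Suppose t₀ > exp(R₀^{1+μ}), C ≥ max{ [2/(m(1−μ)(n−1)√(Q/2))]^{1/(m−1)}, [2R₀^{1+μ}/(m(1−μ)(E+1))]^{1/(m−1)} }, and γ ≥ max{ [m(1+μ)(1−μ)C^{m−1}/(m−1)]^{(1−μ)/(1+μ)}, 1 + m(1−μ)²C^{m−1}/((m−1)[m(1−μ)(1+E)C^{m−1} − R₀^{1+μ}]) }. Define Ū(r,t) for t ≥ 0 by (t+t₀)^{1/(m−1)} Ū(r,t) = C(γ[log(t+t₀)]^{(1−μ)/(1+μ)}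 − r^{1−μ})₊^{1/(m−1)} for r ≥ R₀, and (t+t₀)^{1/(m−1)} Ū(r,t) = C(γ[log(t+t₀)]^{(1−μ)/(1+μ)} − ((1−μ)/(2R₀^{1+μ}))r² − ((1+μ)/2)R₀^{1−μ})₊^{1/(m−1)} for 0 ≤ r < R₀. Then at every point (r,t) ∈ ((0,∞)∖{R₀}) × (0,∞) at which Ū(r,t) > 0, the pointwise supersolution inequality ∂_t Ū ≥ ∂²_{rr}(Ū^m) + (n−1)(ψ'(r)/ψ(r)) ∂_r(Ū^m) holds. -/

import Mathlib

open Real Set Filter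

lemma key_concave (θ c K γ s qa q : ℝ) (hθ0 : 0 < θ)
    (hc : 0 < c) (hK : 0 < K) (hγ : 1 < γ) (hqa : 0 < qa) (hs : qa ≤ s)
    (hq1 : qa ≤ q) (hq2 : q ^ θ < γ * s ^ θ)
    (hi : K ≤ θ * γ ^ (1/θ)) (hii : K ≤ c * (γ - 1) * qa) :
    K * q ^ (θ - 1) ≤ c * (γ * s ^ θ - q ^ θ) + θ * γ * s ^ (θ - 1) := by
  have hq0 : 0 < q := lt_of_lt_of_le hqa hq1
  have hs0 : 0 < s := lt_of_lt_of_le hqa hs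
  have hγ0 : (0:ℝ) < γ := by linarith
  have hγθ : 1 < γ ^ (1/θ) := by
    exact (Real.one_lt_rpow_iff_of_pos hγ0).2 (Or.inl ⟨hγ, by positivity⟩)
  set qb : ℝ := γ ^ (1/θ) * s with hqb_def
  have hqb0 : 0 < qb := by positivity
  have hqbθ : qb ^ θ = γ * s ^ θ := by
    rw [Real.mul_rpow (by positivity) hs0.le, ← Real.rpow_mul hγ0.le]
    rw [show (1/θ) * θ = 1 by field_simp, Real.rpow_one]
  have hqqb : q < qb := by
    have : q ^ θ < qb ^ θ := by rw [hqbθ]; exact hq2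
    exact (Real.rpow_lt_rpow_iff hq0.le hqb0.le hθ0).1 this
  have hqaqb : qa < qb := lt_of_le_of_lt hq1 hqqb
  have e2γ : γ ^ (1/θ) * γ ^ ((1/θ)*(θ-1)) = γ := by
    rw [← Real.rpow_add hγ0, show 1/θ + (1/θ)*(θ-1) = 1 by field_simp; ring, Real.rpow_one]
  have eqb1 : qb ^ (θ-1) = γ ^ ((1/θ)*(θ-1)) * s ^ (θ-1) := by
    rw [hqb_def, Real.mul_rpow (by positivity) hs0.le, ← Real.rpow_mul hγ0.le]
  have hKqb : K * qb ^ (θ-1) ≤ θ * γ * s ^ (θ-1) := by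
    calc K * qb ^ (θ-1) ≤ (θ * γ ^ (1/θ)) * qb ^ (θ-1) := by
            apply mul_le_mul_of_nonneg_right hi (by positivity)
      _ = θ * (γ ^ (1/θ) * γ ^ ((1/θ)*(θ-1))) * s ^ (θ-1) := by rw [eqb1]; ring
      _ = θ * γ * s ^ (θ-1) := by rw [e2γ]
  by_cases hθ1 : 1 ≤ θ
  · -- easy case: q ↦ q^(θ-1) is monotone
    have h1 : q ^ (θ-1) ≤ qb ^ (θ-1) :=
      Real.rpow_le_rpow hq0.le hqqb.le (by linarith)
    have h2 : K * q ^ (θ-1) ≤ K * qb ^ (θ-1) := mul_le_mul_of_nonneg_left h1 hK.le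
    nlinarith [hKqb, hq2, hc]
  push_neg at hθ1
  set M : ℝ := c * γ * s ^ θ + θ * γ * s ^ (θ - 1) with hM_def
  have hM0 : 0 ≤ M := by positivity
  have hmul : ∀ x : ℝ, 0 < x → x ^ θ * x ^ (1 - θ) = x ∧ x ^ (θ-1) * x ^ (1-θ) = 1 := by
    intro x hx
    constructor
    · rw [← Real.rpow_add hx]; norm_num
    · rw [← Real.rpow_add hx]; norm_num
  have ea' : c * qa ^ θ + K * qa ^ (θ - 1) ≤ M := by
    have h1 : K * qa ^ (θ-1) ≤ c * (γ - 1) * (s ^ θ) := by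
      calc K * qa ^ (θ-1) ≤ (c * (γ-1) * qa) * qa ^ (θ-1) := by
              apply mul_le_mul_of_nonneg_right hii (by positivity)
        _ = c * (γ-1) * qa ^ θ := by
              rw [show qa ^ θ = qa ^ ((θ-1)+1) by norm_num, Real.rpow_add hqa, Real.rpow_one]
              ring
        _ ≤ c * (γ-1) * s ^ θ := by
              apply mul_le_mul_of_nonneg_left (Real.rpow_le_rpow hqa.le hs hθ0.le)
              nlinarith
    have h2 : c * qa ^ θ ≤ c * s ^ θ :=
      mul_le_mul_of_nonneg_left (Real.rpow_le_rpow hqa.le hs hθ0.le) hc.le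
    have h3 : 0 ≤ θ * γ * s ^ (θ-1) := by positivity
    rw [hM_def]; nlinarith
  have eb' : c * qb ^ θ + K * qb ^ (θ - 1) ≤ M := by
    rw [hM_def, hqbθ]; nlinarith [hKqb]
  have ea : c * qa + K ≤ M * qa ^ (1 - θ) := by
    have := mul_le_mul_of_nonneg_right ea' (Real.rpow_nonneg hqa.le (1-θ))
    obtain ⟨m1, m2⟩ := hmul qa hqa
    calc c * qa + K = (c * qa ^ θ + K * qa ^ (θ-1)) * qa ^ (1-θ) := by
          rw [add_mul, mul_assoc, mul_assoc, m1, m2]; ring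
      _ ≤ M * qa ^ (1-θ) := this
  have eb : c * qb + K ≤ M * qb ^ (1 - θ) := by
    have := mul_le_mul_of_nonneg_right eb' (Real.rpow_nonneg hqb0.le (1-θ))
    obtain ⟨m1, m2⟩ := hmul qb hqb0
    calc c * qb + K = (c * qb ^ θ + K * qb ^ (θ-1)) * qb ^ (1-θ) := by
          rw [add_mul, mul_assoc, mul_assoc, m1, m2]; ring
      _ ≤ M * qb ^ (1-θ) := this
  have hconc : ConcaveOn ℝ (Set.Ici 0) (fun x : ℝ => x ^ (1-θ)) :=
    Real.concaveOn_rpow (by linarith) (by linarith)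
  set lam1 : ℝ := (qb - q)/(qb - qa) with hl1
  set lam2 : ℝ := (q - qa)/(qb - qa) with hl2
  have hd : 0 < qb - qa := by linarith
  have hl1n : 0 ≤ lam1 := by apply div_nonneg <;> linarith
  have hl2n : 0 ≤ lam2 := by apply div_nonneg <;> linarith
  have hlsum : lam1 + lam2 = 1 := by
    rw [hl1, hl2, ← add_div, div_eq_one_iff_eq hd.ne']; ring
  have hcombo : lam1 • qa + lam2 • qb = q := by
    simp only [smul_eq_mul, hl1, hl2]; field_simp; ring
  have hcq : c * q + K ≤ M * q ^ (1 - θ) := by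
    have h := hconc.2 (Set.mem_Ici.2 hqa.le) (Set.mem_Ici.2 hqb0.le) hl1n hl2n hlsum
    rw [hcombo] at h
    simp only [smul_eq_mul] at h ⊢
    have h1 := mul_le_mul_of_nonneg_left ea hl1n
    have h2 := mul_le_mul_of_nonneg_left eb hl2n
    have h3 : lam1 * (M * qa ^ (1-θ)) + lam2 * (M * qb ^ (1-θ)) ≤ M * q ^ (1-θ) := by
      have h4 := mul_le_mul_of_nonneg_left h hM0
      linarith
    have hcombo' : lam1 * qa + lam2 * qb = q := by simpa [smul_eq_mul] using hcombo
    have hq_eq : lam1 * (c * qa + K) + lam2 * (c * qb + K) = c * q + K := by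
      linear_combination c * hcombo' + K * hlsum
    linarith
  obtain ⟨m1, m2⟩ := hmul q hq0
  have hfin := mul_le_mul_of_nonneg_right hcq (Real.rpow_nonneg hq0.le (θ-1))
  have e1 : (M * q ^ (1-θ)) * q ^ (θ-1) = M := by
    rw [mul_assoc, show q ^ (1-θ) * q ^ (θ-1) = 1 by rw [← Real.rpow_add hq0]; norm_num]
    ring
  have e2 : (c * q + K) * q ^ (θ-1) = c * q ^ θ + K * q ^ (θ-1) := by
    have : q * q ^ (θ-1) = q ^ θ := by
      nth_rewrite 1 [← Real.rpow_one q]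
      rw [← Real.rpow_add hq0]; norm_num
    calc (c * q + K) * q ^ (θ-1) = c * (q * q ^ (θ-1)) + K * q ^ (θ-1) := by ring
      _ = c * q ^ θ + K * q ^ (θ-1) := by rw [this]
  rw [e2, e1] at hfin
  rw [hM_def] at hfin
  linarith
/-- The upper barrier `Ū(r,t)` of Lemma 4.4 of the paper (subcritical quasi-hyperbolic
range): `(t+t₀)^{1/(m-1)} Ū(r,t)` equals
`C (γ [log(t+t₀)]^{(1-μ)/(1+μ)} - r^{1-μ})₊^{1/(m-1)}` for `r ≥ R₀` and
`C (γ [log(t+t₀)]^{(1-μ)/(1+μ)} - ((1-μ)/(2R₀^{1+μ})) r² - ((1+μ)/2) R₀^{1-μ})₊^{1/(m-1)}`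
for `0 ≤ r < R₀`. -/
noncomputable def Ubar (m μ R₀ t₀ C γ : ℝ) (r t : ℝ) : ℝ :=
  (if R₀ ≤ r then
      C * (max (γ * (Real.log (t + t₀)) ^ ((1 - μ) / (1 + μ)) - r ^ (1 - μ)) 0)
        ^ (1 / (m - 1))
    else
      C * (max (γ * (Real.log (t + t₀)) ^ ((1 - μ) / (1 + μ))
            - (1 - μ) / (2 * R₀ ^ (1 + μ)) * r ^ 2
            - (1 + μ) / 2 * R₀ ^ (1 - μ)) 0) ^ (1 / (m - 1)))
    / (t + t₀) ^ (1 / (m - 1))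

set_option maxHeartbeats 1600000 in
/-- Lemma 4.4 of the paper. Under the stated conditions on
`R₀, E, t₀, C, γ`, the barrier `Ū` is a pointwise supersolution of the radial porous
medium equation `u_t = (u^m)_{rr} + (n-1)(ψ'/ψ)(u^m)_r` at every point of positivity
off `r = R₀`. -/
theorem stmt_3
    (m : ℝ) (hm : 1 < m) (n : ℕ) (hn : 2 ≤ n)
    (μ : ℝ) (hμ : μ ∈ Set.Ioo (-1 : ℝ) 1)
    (R Q : ℝ) (hR : 0 < R) (hQ : 0 < Q)
    (w ψ ψ' : ℝ → ℝ)
    (hw : ∀ r : ℝ, 0 ≤ r →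
      w r = if r ≤ R then 0
            else if r ≤ 2 * R then Q * (2 * R) ^ (2 * μ) / R * (r - R)
            else Q * r ^ (2 * μ))
    (hψ0 : ψ 0 = 0) (hψ'0 : ψ' 0 = 1)
    (hd1 : ∀ r ∈ Set.Ici (0 : ℝ), HasDerivWithinAt ψ (ψ' r) (Set.Ici 0) r)
    (hd2 : ∀ r ∈ Set.Ici (0 : ℝ), HasDerivWithinAt ψ' (w r * ψ r) (Set.Ici 0) r) :
    ∃ Rbar : ℝ, 0 < Rbar ∧
      ∀ R₀ : ℝ, Rbar ≤ R₀ →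
      ∀ E : ℝ, 0 < E →
        (∀ r ∈ Set.Ioo (0 : ℝ) R₀, E ≤ ((n : ℝ) - 1) * ψ' r * r / ψ r) →
        (∀ r : ℝ, R₀ ≤ r →
          ((n : ℝ) - 1) * Real.sqrt (Q / 2)
            ≤ ((n : ℝ) - 1) * ψ' r / (ψ r * r ^ μ) - μ / r ^ (1 + μ)) →
      ∀ t₀ C γ : ℝ,
        Real.exp (R₀ ^ (1 + μ)) < t₀ →
        max ((2 / (m * (1 - μ) * ((n : ℝ) - 1) * Real.sqrt (Q / 2))) ^ (1 / (m - 1)))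
            ((2 * R₀ ^ (1 + μ) / (m * (1 - μ) * (E + 1))) ^ (1 / (m - 1))) ≤ C →
        max ((m * (1 + μ) * (1 - μ) * C ^ (m - 1) / (m - 1)) ^ ((1 - μ) / (1 + μ)))
            (1 + m * (1 - μ) ^ 2 * C ^ (m - 1) /
              ((m - 1) * (m * (1 - μ) * (1 + E) * C ^ (m - 1) - R₀ ^ (1 + μ)))) ≤ γ →
      ∀ r t : ℝ, 0 < r → r ≠ R₀ → 0 < t → 0 < Ubar m μ R₀ t₀ C γ r t →
        deriv (deriv (fun x => (Ubar m μ R₀ t₀ C γ x t) ^ m)) r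
          + ((n : ℝ) - 1) * (ψ' r / ψ r)
            * deriv (fun x => (Ubar m μ R₀ t₀ C γ x t) ^ m) r
          ≤ deriv (fun s => Ubar m μ R₀ t₀ C γ r s) t := by
  obtain ⟨hμ1, hμ2⟩ := hμ
  have hμp : (0:ℝ) < 1 + μ := by linarith
  have hμm : (0:ℝ) < 1 - μ := by linarith
  have hm1 : (0:ℝ) < m - 1 := by linarith
  have hm0 : (0:ℝ) < m := by linarith
  have hn1 : (1:ℝ) ≤ (n:ℝ) - 1 := by
    have : (2:ℝ) ≤ (n:ℝ) := by exact_mod_cast hn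
    linarith
  have hsq : 0 < Real.sqrt (Q/2) := Real.sqrt_pos.2 (by linarith)
  -- ψ' = 1 and ψ = id on [0,R]
  have hψ'1 : ∀ x ∈ Icc (0:ℝ) R, ψ' x = 1 := by
    refine eq_of_has_deriv_right_eq (f' := fun _ => (0:ℝ)) (a := 0) (b := R)
      (fun x hx => ?_) (fun x hx => hasDerivWithinAt_const x _ 1)
      (fun x hx => ((hd2 x (mem_Ici.2 hx.1)).continuousWithinAt).mono
        (fun y hy => mem_Ici.2 hy.1)) continuousOn_const hψ'0
    have h2 := (hd2 x (mem_Ici.2 hx.1)).mono (Ici_subset_Ici.2 hx.1)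
    have hwx : w x = 0 := by rw [hw x hx.1, if_pos hx.2.le]
    simpa [hwx] using h2
  have hψid : ∀ x ∈ Icc (0:ℝ) R, ψ x = x := by
    refine eq_of_has_deriv_right_eq (f' := fun _ => (1:ℝ)) (a := 0) (b := R)
      (fun x hx => ?_) (fun x hx => hasDerivWithinAt_id x _)
      (fun x hx => ((hd1 x (mem_Ici.2 hx.1)).continuousWithinAt).mono
        (fun y hy => mem_Ici.2 hy.1)) continuousOn_id (by simpa using hψ0)
    have h2 := (hd1 x (mem_Ici.2 hx.1)).mono (Ici_subset_Ici.2 hx.1)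
    rwa [hψ'1 x ⟨hx.1, hx.2.le⟩] at h2
  refine ⟨max R (max 1 ((2 / Real.sqrt (Q/2)) ^ (1/(1+μ)))),
    lt_of_lt_of_le hR (le_max_left _ _), ?_⟩
  intro R₀ hRbar E hE0 hE hB t₀ C γ ht₀ hC hγ r t hr hrne ht hpos
  have hR₀R : R ≤ R₀ := le_trans (le_max_left _ _) hRbar
  have hR₀1 : (1:ℝ) ≤ R₀ := le_trans (le_trans (le_max_left _ _) (le_max_right _ _)) hRbar
  have hR₀pos : (0:ℝ) < R₀ := lt_of_lt_of_le zero_lt_one hR₀1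
  set A : ℝ := ((n:ℝ)-1) * Real.sqrt (Q/2) with hA_def
  have hA : 0 < A := mul_pos (by linarith) hsq
  set qa : ℝ := R₀ ^ (1+μ) with hqa_def
  have hqa : 0 < qa := Real.rpow_pos_of_pos hR₀pos _
  have hQR : 2 ≤ Real.sqrt (Q/2) * qa := by
    have h1 : (2 / Real.sqrt (Q/2)) ^ (1/(1+μ)) ≤ R₀ :=
      le_trans (le_trans (le_max_right _ _) (le_max_right _ _)) hRbar
    have h2 : ((2 / Real.sqrt (Q/2)) ^ (1/(1+μ))) ^ (1+μ) ≤ qa := by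
      rw [hqa_def]
      exact Real.rpow_le_rpow (Real.rpow_nonneg (by positivity) _) h1 hμp.le
    rw [← Real.rpow_mul (by positivity), one_div, inv_mul_cancel₀ hμp.ne',
      Real.rpow_one] at h2
    have := (div_le_iff₀ hsq).1 h2
    linarith
  have hEn : E ≤ (n:ℝ) - 1 := by
    have hmem : R/2 ∈ Ioo (0:ℝ) R₀ := ⟨by linarith, by linarith⟩
    have h := hE (R/2) hmem
    rw [hψ'1 (R/2) ⟨by linarith, by linarith⟩, hψid (R/2) ⟨by linarith, by linarith⟩,
      mul_one, mul_div_assoc, div_self (by linarith : (R/2:ℝ) ≠ 0), mul_one] at h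
    exact h
  have ht₀1 : (1:ℝ) < t₀ := by have := Real.add_one_le_exp qa; linarith [ht₀, hqa]
  set τ : ℝ := t + t₀ with hτ_def
  have hτpos : 0 < τ := by rw [hτ_def]; linarith
  have hτne : τ ≠ 0 := hτpos.ne'
  set sl : ℝ := Real.log τ with hsl_def
  have hsla : qa < sl := by
    rw [hsl_def]
    exact (Real.lt_log_iff_exp_lt hτpos).2 (by rw [hτ_def]; linarith [ht₀])
  have hsl0 : 0 < sl := lt_trans hqa hsla
  set θ' : ℝ := (1-μ)/(1+μ) with hθ'_def
  have hθ'0 : 0 < θ' := div_pos hμm hμp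
  set e : ℝ := 1/(m-1) with he_def
  have he : 0 < e := by rw [he_def]; positivity
  set Cm1 : ℝ := C ^ (m-1) with hCm1_def
  have hC0 : 0 < C := by
    refine lt_of_lt_of_le (Real.rpow_pos_of_pos ?_ (1/(m-1))) (le_trans (le_max_left _ _) hC)
    have : (0:ℝ) < m * (1-μ) * ((n:ℝ)-1) * Real.sqrt (Q/2) := by positivity
    positivity
  have hCm1 : 0 < Cm1 := Real.rpow_pos_of_pos hC0 _
  have hpowC : ∀ x : ℝ, 0 < x → x ^ (1/(m-1)) ≤ C → x ≤ Cm1 := by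
    intro x hx h
    have h2 := Real.rpow_le_rpow (Real.rpow_nonneg hx.le _) h hm1.le
    rwa [← Real.rpow_mul hx.le, one_div, inv_mul_cancel₀ hm1.ne', Real.rpow_one,
      ← hCm1_def] at h2
  have hmA : 2 ≤ m * (1-μ) * A * Cm1 := by
    have hden : (0:ℝ) < m * (1-μ) * ((n:ℝ)-1) * Real.sqrt (Q/2) := by positivity
    have h1 := hpowC _ (by positivity) (le_trans (le_max_left _ _) hC)
    have h2 := (div_le_iff₀ hden).1 h1
    rw [hA_def]; linarith [h2]
  have hmE : 2 * qa ≤ m * (1-μ) * (E+1) * Cm1 := by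
    have hden : (0:ℝ) < m * (1-μ) * (E+1) := by positivity
    have h1 := hpowC _ (by positivity) (le_trans (le_max_right _ _) hC)
    have h2 := (div_le_iff₀ hden).1 h1
    linarith [h2]
  set K : ℝ := m * (1+μ) * (1-μ) * Cm1 / (m-1) with hK_def
  have hKpos : 0 < K := by rw [hK_def]; positivity
  have hγ1 : K ^ θ' ≤ γ := le_trans (le_max_left _ _) hγ
  set D' : ℝ := m * (1-μ) * (1+E) * Cm1 - qa with hD'_def
  have hD' : 0 < D' := by rw [hD'_def]; linarith [hmE, hqa]
  have hγ2 : 1 + m * (1-μ)^2 * Cm1 / ((m-1) * D') ≤ γ := le_trans (le_max_right _ _) hγ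
  set K' : ℝ := m * (1-μ)^2 * Cm1 / (m-1) with hK'_def
  have hK'pos : 0 < K' := by rw [hK'_def]; positivity
  have hγgt1 : 1 < γ := by
    have h0 : 0 < m * (1-μ)^2 * Cm1 / ((m-1) * D') := by positivity
    linarith
  have hγ0 : 0 < γ := by linarith
  have hKK' : K' ≤ θ' * γ ^ (1/θ') := by
    have h1 : K ≤ γ ^ (1/θ') := by
      have h2 := Real.rpow_le_rpow (Real.rpow_nonneg hKpos.le _) hγ1 (by positivity : (0:ℝ) ≤ 1/θ')
      rwa [← Real.rpow_mul hKpos.le, mul_one_div, div_self hθ'0.ne', Real.rpow_one] at h2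
    have h3 : θ' * K = K' := by
      rw [hK_def, hK'_def, hθ'_def]; field_simp
    linarith [mul_le_mul_of_nonneg_left h1 hθ'0.le, h3]
  have hKD : K' ≤ (γ - 1) * D' := by
    have h1 : K' / D' ≤ γ - 1 := by
      have h2 : m * (1-μ)^2 * Cm1 / ((m-1) * D') = K' / D' := by
        rw [hK'_def, div_div]
      linarith [hγ2, h2.symm.le, h2.le]
    exact (div_le_iff₀ hD').1 h1
  have hAqa : 1 + E ≤ A * qa := by
    have h2 := mul_le_mul_of_nonneg_left hQR (by linarith : (0:ℝ) ≤ (n:ℝ)-1)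
    rw [hA_def]; linarith [h2, hEn, hn1]
  have hii : K' ≤ (m * (1-μ) * A * Cm1 - 1) * (γ - 1) * qa := by
    have hDcc : D' ≤ (m * (1-μ) * A * Cm1 - 1) * qa := by
      have h3 := mul_le_mul_of_nonneg_left hAqa (by positivity : (0:ℝ) ≤ m*(1-μ)*Cm1)
      rw [hD'_def]; linarith [h3]
    calc K' ≤ (γ-1) * D' := hKD
      _ ≤ (γ-1) * ((m*(1-μ)*A*Cm1 - 1) * qa) :=
          mul_le_mul_of_nonneg_left hDcc (by linarith)
      _ = (m*(1-μ)*A*Cm1 - 1) * (γ-1) * qa := by ring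
  -- shared exponent facts
  have hem : e * m - 1 = e := by rw [he_def]; field_simp; ring
  have hem2 : e * m = e + 1 := by rw [he_def]; field_simp; ring
  have hCm : C ^ m = C * Cm1 := by
    have h := (Real.rpow_add hC0 1 (m-1)).symm
    rw [Real.rpow_one] at h
    rw [hCm1_def, h]
    norm_num
  have hτm : τ ^ (e * m) = τ ^ e * τ := by
    have h := Real.rpow_add hτpos e 1
    rw [Real.rpow_one] at h
    rw [hem2, h]
  have hsθ1 : sl ^ (θ' - 1) = sl ^ θ' / sl := by
    rw [Real.rpow_sub hsl0, Real.rpow_one]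
  have hτepos : (0:ℝ) < τ ^ e := Real.rpow_pos_of_pos hτpos e
  have hτ'ne : t + t₀ ≠ 0 := by rw [← hτ_def]; exact hτne
  have hslne : Real.log (t + t₀) ≠ 0 := by rw [← hτ_def, ← hsl_def]; exact hsl0.ne'
  have h1t : HasDerivAt (fun σ : ℝ => σ + t₀) 1 t := (hasDerivAt_id t).add_const t₀
  have h2t := h1t.log hτ'ne
  have h8t := h1t.rpow_const (p := e) (Or.inl hτ'ne)
  rcases lt_or_gt_of_ne hrne with hlt | hgt
  · -- INNER REGION : r < R₀
    have hnle : ¬ R₀ ≤ r := not_le.2 hlt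
    set aa : ℝ := (1-μ) / (2 * qa) with haa_def
    have haapos : 0 < aa := by rw [haa_def]; positivity
    set bb : ℝ := (1+μ)/2 * R₀ ^ (1-μ) with hbb_def
    set v : ℝ := γ * sl ^ θ' - aa * r ^ 2 - bb with hv_def
    have hUbar_eq : ∀ x : ℝ, ¬ R₀ ≤ x →
        Ubar m μ R₀ t₀ C γ x t
          = C * (max (γ * sl ^ θ' - aa * x ^ 2 - bb) 0) ^ e / τ ^ e := by
      intro x hx
      rw [haa_def, hbb_def, hqa_def, hθ'_def, he_def, hsl_def, hτ_def]
      simp only [Ubar, if_neg hx]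
    have hv : 0 < v := by
      rcases le_or_gt v 0 with hcon | h
      · exfalso
        have h0 := hUbar_eq r hnle
        rw [← hv_def] at h0
        rw [h0, max_eq_right hcon, Real.zero_rpow he.ne', mul_zero, zero_div] at hpos
        exact lt_irrefl 0 hpos
      · exact h
    set S : Set ℝ := {x : ℝ | x < R₀ ∧ 0 < γ * sl ^ θ' - aa * x ^ 2 - bb} with hS_def
    have hSopen : IsOpen S := by
      have hcont : Continuous fun x : ℝ => γ * sl ^ θ' - aa * x ^ 2 - bb :=
        (continuous_const.sub (continuous_const.mul (continuous_pow 2))).sub continuous_const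
      have hSeq : S = Iio R₀ ∩ (fun x : ℝ => γ * sl ^ θ' - aa * x ^ 2 - bb) ⁻¹' (Ioi 0) := by
        ext x
        simp only [hS_def, mem_setOf_eq, mem_inter_iff, mem_Iio, mem_preimage, mem_Ioi]
      rw [hSeq]; exact isOpen_Iio.inter (isOpen_Ioi.preimage hcont)
    have hrS : r ∈ S := ⟨hlt, by rw [← hv_def]; exact hv⟩
    have hUxm : ∀ x ∈ S, (Ubar m μ R₀ t₀ C γ x t) ^ m
        = C ^ m * (γ * sl ^ θ' - aa * x ^ 2 - bb) ^ (e*m) / τ ^ (e*m) := by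
      intro x hx
      rw [hUbar_eq x (not_le.2 hx.1), max_eq_left hx.2.le,
        Real.div_rpow (mul_nonneg hC0.le (Real.rpow_nonneg hx.2.le _))
          (Real.rpow_nonneg hτpos.le e),
        Real.mul_rpow hC0.le (Real.rpow_nonneg hx.2.le _),
        ← Real.rpow_mul hx.2.le, ← Real.rpow_mul hτpos.le]
    set CO : ℝ := C ^ m / τ ^ (e*m) * (e*m) with hCO_def
    set D1 : ℝ → ℝ :=
      fun x => -(CO * ((γ * sl ^ θ' - aa * x ^ 2 - bb) ^ (e*m-1) * (aa * (2*x)))) with hD1_def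
    have hparab : ∀ x : ℝ, HasDerivAt (fun y : ℝ => γ * sl ^ θ' - aa * y ^ 2 - bb)
        (-(aa * (2*x))) x := by
      intro x
      have h0 : HasDerivAt (fun y : ℝ => aa * y ^ 2) (aa * (2*x)) x := by
        have := (hasDerivAt_pow 2 x).const_mul aa
        simpa using this
      exact (h0.const_sub (γ * sl ^ θ')).sub_const bb
    have hFD : ∀ x ∈ S, HasDerivAt (fun y => (Ubar m μ R₀ t₀ C γ y t) ^ m) (D1 x) x := by
      intro x hx
      have h2 := ((hparab x).rpow_const (p := e*m) (Or.inl hx.2.ne')).const_mul (C ^ m)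
      have h3 := h2.div_const (τ ^ (e*m))
      have h4 : HasDerivAt
          (fun y => C ^ m * (γ * sl ^ θ' - aa * y ^ 2 - bb) ^ (e*m) / τ ^ (e*m)) (D1 x) x := by
        refine h3.congr_deriv ?_
        rw [hD1_def, hCO_def]
        ring
      refine h4.congr_of_eventuallyEq ?_
      filter_upwards [hSopen.mem_nhds hx] with y hy
      exact hUxm y hy
    have hD1r : deriv (fun x => (Ubar m μ R₀ t₀ C γ x t) ^ m) r = D1 r := (hFD r hrS).deriv
    have hdd : deriv (deriv (fun x => (Ubar m μ R₀ t₀ C γ x t) ^ m)) r = deriv D1 r := by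
      refine Filter.EventuallyEq.deriv_eq ?_
      filter_upwards [hSopen.mem_nhds hrS] with y hy
      exact (hFD y hy).deriv
    have hvne0 : (γ * sl ^ θ' - aa * r ^ 2 - bb) ≠ 0 := by rw [← hv_def]; exact hv.ne'
    have hD2 : HasDerivAt D1
        (-(CO * ((-(aa * (2*r)) * (e*m-1) * (γ * sl ^ θ' - aa * r ^ 2 - bb) ^ (e*m-1-1))
            * (aa * (2*r))
          + (γ * sl ^ θ' - aa * r ^ 2 - bb) ^ (e*m-1) * (aa * (2*1))))) r := by
      have hb := (hparab r).rpow_const (p := e*m-1) (Or.inl hvne0)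
      have hc : HasDerivAt (fun y : ℝ => aa * (2*y)) (aa * (2*1)) r :=
        ((hasDerivAt_id r).const_mul 2).const_mul aa
      have hab := (hb.mul hc).const_mul CO
      have hneg := hab.neg
      rw [hD1_def]
      exact hneg
    -- time derivative
    have hvne : γ * Real.log (t + t₀) ^ θ' - aa * r ^ 2 - bb ≠ 0 := by
      rw [← hτ_def, ← hsl_def]; exact hvne0
    have hTev : (fun σ => Ubar m μ R₀ t₀ C γ r σ) =ᶠ[nhds t]
        (fun σ => C * (γ * Real.log (σ + t₀) ^ θ' - aa * r ^ 2 - bb) ^ e / (σ + t₀) ^ e) := by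
      have hΦ : ContinuousAt (fun σ : ℝ => γ * Real.log (σ + t₀) ^ θ' - aa * r ^ 2 - bb) t := by
        have hc1 : ContinuousAt (fun σ : ℝ => σ + t₀) t :=
          continuousAt_id.add continuousAt_const
        have hc2 : ContinuousAt (fun σ : ℝ => Real.log (σ + t₀)) t := hc1.log hτ'ne
        exact (((hc2.rpow_const (Or.inr hθ'0.le)).const_mul γ).sub
          continuousAt_const).sub continuousAt_const
      have hΦt : (0:ℝ) < γ * Real.log (t + t₀) ^ θ' - aa * r ^ 2 - bb := by
        rw [← hτ_def, ← hsl_def, ← hv_def]; exact hv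
      filter_upwards [hΦ.preimage_mem_nhds (Ioi_mem_nhds hΦt)] with σ hσ
      have hσ' : (0:ℝ) < γ * Real.log (σ + t₀) ^ θ' - aa * r ^ 2 - bb := hσ
      have hh : Ubar m μ R₀ t₀ C γ r σ
          = C * (max (γ * Real.log (σ + t₀) ^ θ' - aa * r ^ 2 - bb) 0) ^ e / (σ + t₀) ^ e := by
        rw [haa_def, hbb_def, hqa_def, hθ'_def, he_def]
        simp only [Ubar, if_neg hnle]
      rw [hh, max_eq_left hσ'.le]
    have h3t := h2t.rpow_const (p := θ') (Or.inl hslne)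
    have h4t := h3t.const_mul γ
    have h5t := (h4t.sub_const (aa * r ^ 2)).sub_const bb
    have h6t := h5t.rpow_const (p := e) (Or.inl hvne)
    have h7t := h6t.const_mul C
    have h9t := h7t.div h8t (by rw [← hτ_def]; exact hτepos.ne')
    have hve3 : v ^ e = v ^ (e-1) * v := by
      nth_rewrite 1 [show e = (e-1)+1 by ring]
      rw [Real.rpow_add hv, Real.rpow_one]
    have hTime : deriv (fun s => Ubar m μ R₀ t₀ C γ r s) t
        = C * e * v ^ (e-1) / (τ ^ e * τ) * (γ * θ' * (sl ^ θ' / sl) - v) := by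
      rw [hTev.deriv_eq, HasDerivAt.deriv (f := fun σ => C * (γ * Real.log (σ + t₀) ^ θ' - aa * r ^ 2 - bb) ^ e / (σ + t₀) ^ e) h9t, ← hτ_def, ← hsl_def, ← hv_def, hsθ1,
        show τ ^ (e-1) = τ ^ e / τ by rw [Real.rpow_sub hτpos, Real.rpow_one], hve3]
      field_simp
    -- algebraic facts
    have hWr : E ≤ ((n:ℝ)-1) * (ψ' r / ψ r) * r := by
      have h := hE r ⟨hr, hlt⟩
      rw [show ((n:ℝ)-1) * ψ' r * r / ψ r = ((n:ℝ)-1) * (ψ' r / ψ r) * r by ring] at h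
      exact h
    have hr2R : r ^ 2 ≤ R₀ ^ 2 := pow_le_pow_left₀ hr.le hlt.le 2
    have hR2 : (R₀:ℝ) ^ 2 = qa * R₀ ^ (1-μ) := by
      rw [hqa_def, ← Real.rpow_add hR₀pos,
        show (1+μ)+(1-μ) = ((2:ℕ):ℝ) by push_cast; ring, Real.rpow_natCast]
    have hqθ : qa ^ θ' = R₀ ^ (1-μ) := by
      rw [hqa_def, ← Real.rpow_mul hR₀pos.le,
        show (1+μ)*θ' = 1-μ by rw [hθ'_def]; field_simp [hμp.ne']]
    have hslθ : R₀ ^ (1-μ) ≤ sl ^ θ' := by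
      rw [← hqθ]; exact Real.rpow_le_rpow hqa.le hsla.le hθ'0.le
    have hRpos' : 0 < R₀ ^ (1-μ) := Real.rpow_pos_of_pos hR₀pos _
    have haaR : aa * R₀ ^ 2 + bb = R₀ ^ (1-μ) := by
      rw [haa_def, hbb_def, hR2]; field_simp [hqa.ne']; ring
    have hvlow : (γ - 1) * R₀ ^ (1-μ) ≤ v := by
      have h1 := mul_le_mul_of_nonneg_left hslθ hγ0.le
      have h2 := mul_le_mul_of_nonneg_left hr2R haapos.le
      rw [hv_def]; linarith [haaR]
    have hvnn : 0 ≤ v := hv.le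
    -- central spatial estimate
    have hstep : m * Cm1 * (4*aa^2*e*r^2) ≤ (2*aa*(1+E)*m*Cm1 - 1) * v := by
      have sA : m * Cm1 * (4*aa^2*e*r^2) ≤ m * Cm1 * (4*aa^2*e*R₀^2) := by
        have hco : (0:ℝ) ≤ m * Cm1 * (4*aa^2*e) := by positivity
        calc m * Cm1 * (4*aa^2*e*r^2) = m * Cm1 * (4*aa^2*e) * r^2 := by ring
          _ ≤ m * Cm1 * (4*aa^2*e) * R₀^2 := mul_le_mul_of_nonneg_left hr2R hco
          _ = m * Cm1 * (4*aa^2*e*R₀^2) := by ring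
      have s2 : m * Cm1 * (4*aa^2*e*R₀^2) = K' * R₀ ^ (1-μ) / qa := by
        rw [haa_def, hK'_def, he_def, hR2]; field_simp [hqa.ne', hm1.ne']; ring
      have s3 : (2*aa*(1+E)*m*Cm1 - 1) = D' / qa := by
        rw [haa_def, hD'_def]; field_simp [hqa.ne']
      have s4 : K' * R₀ ^ (1-μ) ≤ D' * v := by
        calc K' * R₀ ^ (1-μ) ≤ ((γ-1) * D') * R₀ ^ (1-μ) :=
              mul_le_mul_of_nonneg_right hKD hRpos'.le
          _ = D' * ((γ-1) * R₀ ^ (1-μ)) := by ring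
          _ ≤ D' * v := mul_le_mul_of_nonneg_left hvlow hD'.le
      have s5 := mul_le_mul_of_nonneg_right s4 (inv_nonneg.2 hqa.le)
      calc m * Cm1 * (4*aa^2*e*r^2) ≤ m * Cm1 * (4*aa^2*e*R₀^2) := sA
        _ = K' * R₀ ^ (1-μ) / qa := s2
        _ = K' * R₀ ^ (1-μ) * qa⁻¹ := by rw [div_eq_mul_inv]
        _ ≤ D' * v * qa⁻¹ := s5
        _ = D' / qa * v := by rw [div_eq_mul_inv]; ring
        _ = (2*aa*(1+E)*m*Cm1 - 1) * v := by rw [s3]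
    have hvev : 0 < v ^ (e-1) := Real.rpow_pos_of_pos hv _
    have hmain : m * Cm1 * (4*aa^2*e*r^2 - 2*aa*v
          - 2*aa*(((n:ℝ)-1) * (ψ' r / ψ r) * r) * v)
        ≤ γ * θ' * (sl ^ θ' / sl) - v := by
      clear_value aa bb v sl θ' e Cm1 qa A K D' K' τ
      have hEterm := mul_le_mul_of_nonneg_left hWr
        (mul_nonneg (mul_nonneg (mul_nonneg (by norm_num : (0:ℝ) ≤ 2) haapos.le)
          (mul_nonneg hm0.le hCm1.le)) hv.le)
      have hpos2 : 0 < γ * θ' * (sl ^ θ' / sl) := by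
        have h0 : 0 < sl ^ θ' / sl := div_pos (Real.rpow_pos_of_pos hsl0 _) hsl0
        exact mul_pos (mul_pos hγ0 hθ'0) h0
      ring_nf at hstep hEterm hpos2 ⊢
      linarith only [hstep, hEterm, hpos2]
    have hCf : 0 < C * e * v ^ (e-1) / (τ ^ e * τ) :=
      div_pos (mul_pos (mul_pos hC0 he) hvev) (mul_pos hτepos hτpos)
    have hfinal := mul_le_mul_of_nonneg_left hmain hCf.le
    rw [hdd, hD2.deriv, hD1r, hTime]
    simp only [hD1_def]
    rw [hCO_def, hCm, hτm, hem, ← hv_def, hve3]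
    clear_value aa bb v sl θ' e Cm1 qa A K D' K' τ CO D1
    ring_nf at hfinal ⊢
    linarith [hfinal]
  · -- OUTER REGION : R₀ < r
    have hrR₀ : R₀ ≤ r := hgt.le
    set u : ℝ := γ * sl ^ θ' - r ^ (1-μ) with hu_def
    have hUbar_eq : ∀ x : ℝ, R₀ ≤ x →
        Ubar m μ R₀ t₀ C γ x t = C * (max (γ * sl ^ θ' - x ^ (1-μ)) 0) ^ e / τ ^ e := by
      intro x hx
      rw [hθ'_def, he_def, hsl_def, hτ_def]
      simp only [Ubar, if_pos hx]
    have hu : 0 < u := by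
      rcases le_or_gt u 0 with hcon | h
      · exfalso
        have h0 := hUbar_eq r hrR₀
        rw [← hu_def] at h0
        rw [h0, max_eq_right hcon, Real.zero_rpow he.ne', mul_zero, zero_div] at hpos
        exact lt_irrefl 0 hpos
      · exact h
    set S : Set ℝ := {x : ℝ | R₀ < x ∧ 0 < γ * sl ^ θ' - x ^ (1-μ)} with hS_def
    have hSopen : IsOpen S := by
      have hcont : Continuous fun x : ℝ => γ * sl ^ θ' - x ^ (1-μ) :=
        continuous_const.sub (Continuous.rpow_const continuous_id (fun x => Or.inr hμm.le))
      have hSeq : S = Ioi R₀ ∩ (fun x : ℝ => γ * sl ^ θ' - x ^ (1-μ)) ⁻¹' (Ioi 0) := by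
        ext x
        simp only [hS_def, mem_setOf_eq, mem_inter_iff, mem_Ioi, mem_preimage]
      rw [hSeq]; exact isOpen_Ioi.inter (isOpen_Ioi.preimage hcont)
    have hrS : r ∈ S := ⟨hgt, by rw [← hu_def]; exact hu⟩
    have hxpos : ∀ x ∈ S, (0:ℝ) < x := fun x hx => lt_trans hR₀pos hx.1
    have hUxm : ∀ x ∈ S, (Ubar m μ R₀ t₀ C γ x t) ^ m
        = C ^ m * (γ * sl ^ θ' - x ^ (1-μ)) ^ (e*m) / τ ^ (e*m) := by
      intro x hx
      rw [hUbar_eq x hx.1.le, max_eq_left hx.2.le,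
        Real.div_rpow (mul_nonneg hC0.le (Real.rpow_nonneg hx.2.le _))
          (Real.rpow_nonneg hτpos.le e),
        Real.mul_rpow hC0.le (Real.rpow_nonneg hx.2.le _),
        ← Real.rpow_mul hx.2.le, ← Real.rpow_mul hτpos.le]
    set CO : ℝ := C ^ m / τ ^ (e*m) * (e*m) * (1-μ) with hCO_def
    set D1 : ℝ → ℝ :=
      fun x => -(CO * (x ^ (-μ) * (γ * sl ^ θ' - x ^ (1-μ)) ^ (e*m-1))) with hD1_def
    have hFD : ∀ x ∈ S, HasDerivAt (fun y => (Ubar m μ R₀ t₀ C γ y t) ^ m) (D1 x) x := by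
      intro x hx
      have hx0 : 0 < x := hxpos x hx
      have h1 : HasDerivAt (fun y : ℝ => γ * sl ^ θ' - y ^ (1-μ))
          (-((1-μ) * x ^ (1-μ-1))) x :=
        (Real.hasDerivAt_rpow_const (Or.inl hx0.ne')).const_sub (γ * sl ^ θ')
      have h2 := (h1.rpow_const (p := e*m) (Or.inl hx.2.ne')).const_mul (C ^ m)
      have h3 := h2.div_const (τ ^ (e*m))
      have h4 : HasDerivAt
          (fun y => C ^ m * (γ * sl ^ θ' - y ^ (1-μ)) ^ (e*m) / τ ^ (e*m)) (D1 x) x := by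
        refine h3.congr_deriv ?_
        rw [hD1_def, hCO_def, show (1-μ-1:ℝ) = -μ by ring]
        ring
      refine h4.congr_of_eventuallyEq ?_
      filter_upwards [hSopen.mem_nhds hx] with y hy
      exact hUxm y hy
    have hD1r : deriv (fun x => (Ubar m μ R₀ t₀ C γ x t) ^ m) r = D1 r := (hFD r hrS).deriv
    have hdd : deriv (deriv (fun x => (Ubar m μ R₀ t₀ C γ x t) ^ m)) r = deriv D1 r := by
      refine Filter.EventuallyEq.deriv_eq ?_
      filter_upwards [hSopen.mem_nhds hrS] with y hy
      exact (hFD y hy).deriv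
    have hune0 : (γ * sl ^ θ' - r ^ (1-μ)) ≠ 0 := by rw [← hu_def]; exact hu.ne'
    have hD2 : HasDerivAt D1
        (-(CO * ((-μ * r ^ (-μ-1)) * (γ * sl ^ θ' - r ^ (1-μ)) ^ (e*m-1)
          + r ^ (-μ) * (-((1-μ) * r ^ (1-μ-1)) * (e*m-1)
              * (γ * sl ^ θ' - r ^ (1-μ)) ^ (e*m-1-1))))) r := by
      have ha : HasDerivAt (fun x : ℝ => x ^ (-μ)) (-μ * r ^ (-μ-1)) r :=
        Real.hasDerivAt_rpow_const (Or.inl hr.ne')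
      have h1 : HasDerivAt (fun y : ℝ => γ * sl ^ θ' - y ^ (1-μ))
          (-((1-μ) * r ^ (1-μ-1))) r :=
        (Real.hasDerivAt_rpow_const (Or.inl hr.ne')).const_sub (γ * sl ^ θ')
      have hb := h1.rpow_const (p := e*m-1) (Or.inl hune0)
      have hab := (ha.mul hb).const_mul CO
      have hneg := hab.neg
      rw [hD1_def]
      exact hneg
    -- time derivative
    have hune : γ * Real.log (t + t₀) ^ θ' - r ^ (1-μ) ≠ 0 := by
      rw [← hτ_def, ← hsl_def]; exact hune0
    have hTev : (fun σ => Ubar m μ R₀ t₀ C γ r σ) =ᶠ[nhds t]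
        (fun σ => C * (γ * Real.log (σ + t₀) ^ θ' - r ^ (1-μ)) ^ e / (σ + t₀) ^ e) := by
      have hΦ : ContinuousAt (fun σ : ℝ => γ * Real.log (σ + t₀) ^ θ' - r ^ (1-μ)) t := by
        have hc1 : ContinuousAt (fun σ : ℝ => σ + t₀) t :=
          continuousAt_id.add continuousAt_const
        have hc2 : ContinuousAt (fun σ : ℝ => Real.log (σ + t₀)) t :=
          hc1.log hτ'ne
        exact ((hc2.rpow_const (Or.inr hθ'0.le)).const_mul γ).sub continuousAt_const
      have hΦt : (0:ℝ) < γ * Real.log (t + t₀) ^ θ' - r ^ (1-μ) := by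
        rw [← hτ_def, ← hsl_def, ← hu_def]; exact hu
      filter_upwards [hΦ.preimage_mem_nhds (Ioi_mem_nhds hΦt)] with σ hσ
      have hσ' : (0:ℝ) < γ * Real.log (σ + t₀) ^ θ' - r ^ (1-μ) := hσ
      have hh : Ubar m μ R₀ t₀ C γ r σ
          = C * (max (γ * Real.log (σ + t₀) ^ θ' - r ^ (1-μ)) 0) ^ e / (σ + t₀) ^ e := by
        rw [hθ'_def, he_def]
        simp only [Ubar, if_pos hrR₀]
      rw [hh, max_eq_left hσ'.le]
    have h3t := h2t.rpow_const (p := θ') (Or.inl hslne)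
    have h4t := h3t.const_mul γ
    have h5t := h4t.sub_const (r ^ (1-μ))
    have h6t := h5t.rpow_const (p := e) (Or.inl hune)
    have h7t := h6t.const_mul C
    have h9t := h7t.div h8t (by rw [← hτ_def]; exact hτepos.ne')
    have hue3 : u ^ e = u ^ (e-1) * u := by
      nth_rewrite 1 [show e = (e-1)+1 by ring]
      rw [Real.rpow_add hu, Real.rpow_one]
    have hTime : deriv (fun s => Ubar m μ R₀ t₀ C γ r s) t
        = C * e * u ^ (e-1) / (τ ^ e * τ) * (γ * θ' * (sl ^ θ' / sl) - u) := by
      rw [hTev.deriv_eq, HasDerivAt.deriv (f := fun σ => C * (γ * Real.log (σ + t₀) ^ θ' - r ^ (1-μ)) ^ e / (σ + t₀) ^ e) h9t, ← hτ_def, ← hsl_def, ← hu_def, hsθ1,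
        show τ ^ (e-1) = τ ^ e / τ by rw [Real.rpow_sub hτpos, Real.rpow_one], hue3]
      field_simp
    -- final algebraic comparison (outer)
    have hq1eq : (r ^ (1+μ)) ^ θ' = r ^ (1-μ) := by
      rw [← Real.rpow_mul hr.le, show (1+μ)*θ' = 1-μ by rw [hθ'_def]; field_simp [hμp.ne']]
    have hq2eq : (r ^ (1+μ)) ^ (θ'-1) = r ^ (-μ) * r ^ (-μ) := by
      rw [← Real.rpow_mul hr.le,
        show (1+μ)*(θ'-1) = -μ + -μ by rw [hθ'_def]; field_simp [hμp.ne']; ring,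
        Real.rpow_add hr]
    have hqge : qa ≤ r ^ (1+μ) := by
      rw [hqa_def]; exact Real.rpow_le_rpow hR₀pos.le hrR₀ hμp.le
    have hKey := key_concave θ' (m*(1-μ)*A*Cm1 - 1) K' γ sl qa (r ^ (1+μ)) hθ'0
      (by linarith [hmA]) hK'pos hγgt1 hqa hsla.le hqge
      (by rw [hq1eq]; have h9 := hu; rw [hu_def] at h9; linarith) hKK' hii
    rw [hq1eq, hq2eq, hsθ1, ← hu_def] at hKey
    have hW : A ≤ ((n:ℝ)-1) * (ψ' r / ψ r) * r ^ (-μ) - μ * r ^ (-μ) / r := by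
      have h := hB r hrR₀
      have e1 : ((n:ℝ)-1) * ψ' r / (ψ r * r ^ μ) = ((n:ℝ)-1) * (ψ' r / ψ r) * r ^ (-μ) := by
        rw [Real.rpow_neg hr.le]; ring
      have e2 : μ / r ^ (1+μ) = μ * r ^ (-μ) / r := by
        rw [Real.rpow_neg hr.le, Real.rpow_add hr, Real.rpow_one]; ring
      rw [e1, e2] at h
      exact h
    have huev : 0 < u ^ (e-1) := Real.rpow_pos_of_pos hu _
    have hmain : m * Cm1 * (1-μ) * (μ * (r ^ (-μ) / r) * u
          + (1-μ) * e * (r ^ (-μ) * r ^ (-μ))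
          - ((n:ℝ)-1) * (ψ' r / ψ r) * r ^ (-μ) * u)
        ≤ γ * θ' * (sl ^ θ' / sl) - u := by
      have h1 := mul_le_mul_of_nonneg_left hW
        (mul_nonneg (mul_nonneg (mul_nonneg hm0.le hCm1.le) hμm.le) hu.le)
      have heK : K' = m * e * (1-μ)^2 * Cm1 := by rw [hK'_def, he_def]; ring
      rw [heK] at hKey
      ring_nf at hKey h1 ⊢
      linarith [hKey, h1]
    have hCf : 0 < C * e * u ^ (e-1) / (τ ^ e * τ) :=
      div_pos (mul_pos (mul_pos hC0 he) huev) (mul_pos hτepos hτpos)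
    have hfinal := mul_le_mul_of_nonneg_left hmain hCf.le
    rw [hdd, hD2.deriv, hD1r, hTime]
    simp only [hD1_def]
    rw [hCO_def, hCm, hτm, hem,
      show (1-μ-1:ℝ) = -μ by ring,
      show r ^ (-μ-1) = r ^ (-μ) / r by rw [Real.rpow_sub hr, Real.rpow_one],
      ← hu_def, hue3]
    ring_nf at hfinal ⊢
    linarith [hfinal]
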